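/- False Extension 2 is false: there is an infeasible multi-item reduced form (three i.i.d. unit-demand bidders, three items; types A with probability ε and B with probability 1−ε; π_1(A)=π_2(A)=1/2, π_3(A)=0, π_j(B)=0 for all j) such that for every choice of item-independent weights W_i(A), W_i(B) ≥ 0 (W_{ij}(t) = W_i(t) for all items j), the weighted Border inequality Σ_{i,j,t} W_i(t)π_j(t)Pr[t_i=t] ≤ Σ_P Pr[P]·max_{φ(P)∈F} Σ_{i,j} W_i(P_i)φ_{ij}(P) holds; hence constricting weights must depend on the item. -/

import Mathlib

/- Three i.i.d. unit-demand bidders, three items.  Each bidder has type A (`true`) with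
probability ε and type B (`false`) with probability 1 − ε. -/

/-- The type distribution: `Pr[A] = ε`, `Pr[B] = 1 − ε`. -/
noncomputable def muE (ε : ℝ) : Bool → ℝ := fun t => if t then ε else 1 - ε

/-- The symmetric reduced form: `π_1(A) = π_2(A) = 1/2`, `π_3(A) = 0`, `π_j(B) = 0`. -/
noncomputable def piE3 : Fin 3 → Bool → ℝ :=
  fun j t => if j = 2 then 0 else if t then 1/2 else 0

/-- The feasible allocations: each item to at most one bidder, each (unit-demand)
bidder at most one item. -/
def F3 : Set (Fin 3 → Fin 3 → ℝ) :=
  {φ | (∀ i j, 0 ≤ φ i j) ∧ (∀ i, ∑ j, φ i j ≤ 1) ∧ (∀ j, ∑ i, φ i j ≤ 1)}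

/-
Infeasibility: multiplying the interim constraint of a type-A bidder by `Pr[A] = ε` turns it
into an ex-ante one, so in expectation items 1 and 2 go to type-A bidders with total mass
`3ε`, the expected number of type-A bidders.  In each profile at most `min(#A, 2)` such units
can be served, which loses the mass `ε³` of the all-A profile.

Border inequality: giving item `i` to bidder `i` is feasible, so the right side is at least
`∑ᵢ E[Wᵢ(tᵢ)] = ∑ᵢ (ε Wᵢ(A) + (1 - ε) Wᵢ(B))`, while the left side is `∑ᵢ ε Wᵢ(A)`.
-/

open Finset

theorem sum_prod_mul_apply {ι α R : Type*} [Fintype ι] [DecidableEq ι] [Fintype α]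
    [CommSemiring R] (μ : α → R) (hμ : ∑ t, μ t = 1) (g : α → R) (i : ι) :
    ∑ P : ι → α, (∏ l, μ (P l)) * g (P i) = ∑ t, μ t * g t := by
  have hfactor : ∀ P : ι → α,
      (∏ l, μ (P l)) * g (P i) = ∏ l, μ (P l) * if l = i then g (P l) else 1 := by
    intro P
    rw [prod_mul_distrib, prod_ite_eq' univ i, if_pos (mem_univ i)]
  simp_rw [hfactor]
  rw [← Fintype.prod_sum fun l t => μ t * if l = i then g t else 1]
  rw [Fintype.prod_eq_single i fun l hl => by simp [hl, hμ]]
  simp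

theorem sum_prod_mul_sum_apply {ι α R : Type*} [Fintype ι] [DecidableEq ι] [Fintype α]
    [CommSemiring R] (μ : α → R) (hμ : ∑ t, μ t = 1) (g : ι → α → R) :
    ∑ P : ι → α, (∏ l, μ (P l)) * ∑ i, g i (P i) = ∑ i, ∑ t, μ t * g i t := by
  simp_rw [mul_sum]
  rw [sum_comm]
  exact sum_congr rfl fun i _ => sum_prod_mul_apply μ hμ (g i) i

theorem sum_sum_le_min_card {ι κ : Type*} [Fintype ι] [Fintype κ] {φ : ι → κ → ℝ}
    (hφ : ∀ i j, 0 ≤ φ i j) (hrow : ∀ i, ∑ j, φ i j ≤ 1) (hcol : ∀ j, ∑ i, φ i j ≤ 1)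
    (S : Finset ι) (T : Finset κ) :
    ∑ i ∈ S, ∑ j ∈ T, φ i j ≤ min (#S : ℝ) #T := by
  refine le_min ?_ ?_
  · calc ∑ i ∈ S, ∑ j ∈ T, φ i j ≤ ∑ i ∈ S, (1 : ℝ) :=
          sum_le_sum fun i _ => (sum_le_univ_sum_of_nonneg (hφ i)).trans (hrow i)
      _ = #S := by simp
  · rw [sum_comm]
    calc ∑ j ∈ T, ∑ i ∈ S, φ i j ≤ ∑ j ∈ T, (1 : ℝ) :=
          sum_le_sum fun j _ => (sum_le_univ_sum_of_nonneg (hφ · j)).trans (hcol j)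
      _ = #T := by simp

theorem sum_ite_prod_eq_mul_sum_ite_prod_erase {ι α R : Type*} [Fintype ι] [DecidableEq ι]
    [Fintype α] [DecidableEq α] [CommSemiring R] (μ : α → R) (i : ι) (t : α) (x : (ι → α) → R) :
    ∑ P : ι → α, (if P i = t then (∏ l, μ (P l)) * x P else 0)
      = μ t * ∑ P : ι → α, (if P i = t then (∏ l ∈ univ.erase i, μ (P l)) * x P else 0) := by
  rw [mul_sum]
  refine sum_congr rfl fun P _ => ?_
  split_ifs with h
  · rw [← mul_prod_erase univ _ (mem_univ i), h, mul_assoc]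
  · rw [mul_zero]

theorem sum_muE (ε : ℝ) : ∑ t, muE ε t = 1 := by
  simp [muE]

theorem muE_nonneg {ε : ℝ} (h0 : 0 ≤ ε) (h1 : ε ≤ 1) (t : Bool) : 0 ≤ muE ε t := by
  cases t <;> simp [muE, h0, h1]

theorem sum_le_sSup_weightedValue (v : Fin 3 → ℝ) (hv : ∀ i, 0 ≤ v i) :
    ∑ i, v i ≤ sSup ((fun φ => ∑ i : Fin 3, ∑ j : Fin 3, v i * φ i j) '' F3) := by
  refine le_csSup ⟨∑ i, v i, ?_⟩ ⟨fun i j => if i = j then 1 else 0, ⟨?_, ?_, ?_⟩, ?_⟩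
  · rintro x ⟨φ, ⟨-, hrow, -⟩, rfl⟩
    calc ∑ i, ∑ j, v i * φ i j = ∑ i, v i * ∑ j, φ i j := by simp only [mul_sum]
      _ ≤ ∑ i, v i * 1 := sum_le_sum fun i _ => mul_le_mul_of_nonneg_left (hrow i) (hv i)
      _ = ∑ i, v i := by simp
  · intro i j; positivity
  · intro i; simp
  · intro j; simp
  · simp [mul_ite]

theorem weightedBorder_of_itemIndependent {ε : ℝ} (h0 : 0 ≤ ε) (h1 : ε ≤ 1)
    (W : Fin 3 → Bool → ℝ) (hW : ∀ i t, 0 ≤ W i t) :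
    ∑ i : Fin 3, ∑ j : Fin 3, ∑ t : Bool, W i t * piE3 j t * muE ε t
      ≤ ∑ P : Fin 3 → Bool, (∏ i, muE ε (P i)) *
          sSup ((fun φ => ∑ i : Fin 3, ∑ j : Fin 3, W i (P i) * φ i j) '' F3) :=
  calc ∑ i : Fin 3, ∑ j : Fin 3, ∑ t : Bool, W i t * piE3 j t * muE ε t
      = ∑ i, muE ε true * W i true := by
        simp [Fin.sum_univ_three, piE3, muE]; ring
    _ ≤ ∑ i, ∑ t, muE ε t * W i t :=
        sum_le_sum fun i _ => by
          simpa [Fintype.sum_bool] using mul_nonneg (muE_nonneg h0 h1 false) (hW i false)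
    _ = ∑ P : Fin 3 → Bool, (∏ i, muE ε (P i)) * ∑ i, W i (P i) :=
        (sum_prod_mul_sum_apply _ (sum_muE ε) W).symm
    _ ≤ _ := sum_le_sum fun P _ => mul_le_mul_of_nonneg_left
        (sum_le_sSup_weightedValue _ fun i => hW i (P i))
        (prod_nonneg fun l _ => muE_nonneg h0 h1 (P l))

theorem not_exists_allocation_piE3 {ε : ℝ} (h0 : 0 < ε) (h1 : ε ≤ 1) :
    ¬ ∃ φ : (Fin 3 → Bool) → Fin 3 → Fin 3 → ℝ,
        (∀ P i j, 0 ≤ φ P i j) ∧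
        (∀ P (j : Fin 3), ∑ i, φ P i j ≤ 1) ∧
        (∀ P (i : Fin 3), ∑ j, φ P i j ≤ 1) ∧
        (∀ (i : Fin 3) (t : Bool) (j : Fin 3),
          (∑ P : Fin 3 → Bool,
            if P i = t then (∏ l ∈ univ.erase i, muE ε (P l)) * φ P i j else 0)
          = piE3 j t) := by
  rintro ⟨φ, hφ, hitem, hbid, hinterim⟩
  -- the type-A bidders of a profile, and the items `1, 2` of the paper
  let A : (Fin 3 → Bool) → Finset (Fin 3) := fun P => {i | P i = true}
  let T : Finset (Fin 3) := {0, 1}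
  have hserved : ∑ P : Fin 3 → Bool, (∏ l, muE ε (P l)) * ∑ i ∈ A P, ∑ j ∈ T, φ P i j
      = 3 * ε := by
    calc _ = ∑ i, ∑ j ∈ T, ∑ P : Fin 3 → Bool,
          (if P i = true then (∏ l, muE ε (P l)) * φ P i j else 0) := by
          simp only [A, sum_filter, mul_sum, mul_ite, mul_zero, ite_sum_zero]
          rw [sum_comm]
          exact sum_congr rfl fun i _ => sum_comm
      _ = ∑ i : Fin 3, ∑ j ∈ T, muE ε true * piE3 j true := by
          simp only [sum_ite_prod_eq_mul_sum_ite_prod_erase, hinterim]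
      _ = 3 * ε := by simp [T, piE3, muE]; ring
  have hcount : ∑ P : Fin 3 → Bool, (∏ l, muE ε (P l)) * (#(A P) : ℝ) = 3 * ε := by
    simp only [A, natCast_card_filter]
    rw [sum_prod_mul_sum_apply _ (sum_muE ε) fun _ t => if t = true then (1 : ℝ) else 0]
    simp [muE]
  have hbound : ∀ P, ∑ i ∈ A P, ∑ j ∈ T, φ P i j
      ≤ #(A P) - if P = fun _ => true then 1 else 0 := by
    intro P
    have := sum_sum_le_min_card (hφ P) (hbid P) (hitem P) (A P) T
    split_ifs with hP
    · subst hP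
      have h2 := this.trans (min_le_right _ _)
      norm_num [A, T] at h2 ⊢
      linarith
    · simpa using this.trans (min_le_left _ _)
  have : 3 * ε ≤ 3 * ε - ε ^ 3 :=
    calc 3 * ε = ∑ P : Fin 3 → Bool, (∏ l, muE ε (P l)) * ∑ i ∈ A P, ∑ j ∈ T, φ P i j :=
          hserved.symm
      _ ≤ ∑ P : Fin 3 → Bool, (∏ l, muE ε (P l)) *
            (#(A P) - if P = fun _ => true then 1 else 0) :=
          sum_le_sum fun P _ => mul_le_mul_of_nonneg_left (hbound P)
            (prod_nonneg fun l _ => muE_nonneg h0.le h1 (P l))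
      _ = 3 * ε - ε ^ 3 := by
          simp only [mul_sub, sum_sub_distrib, hcount, mul_ite, mul_one, mul_zero,
            sum_ite_eq']
          simp [muE, pow_succ]
  linarith [pow_pos h0 3]

/-- False Extension 2 is false: the reduced form above is infeasible, yet for every
choice of item-independent non-negative weights `W_i(t)` (`W_{ij}(t) = W_i(t)` for all
items `j`), the weighted Border inequality holds; hence constricting weights must
depend on the item. -/
theorem stmt_16 (ε : ℝ) (hε : 0 < ε) (hε' : ε < 1) :
    -- the reduced form is infeasible:
    (¬ ∃ φ : (Fin 3 → Bool) → Fin 3 → Fin 3 → ℝ,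
        (∀ P i j, 0 ≤ φ P i j) ∧
        (∀ P (j : Fin 3), ∑ i, φ P i j ≤ 1) ∧
        (∀ P (i : Fin 3), ∑ j, φ P i j ≤ 1) ∧
        (∀ (i : Fin 3) (t : Bool) (j : Fin 3),
          (∑ P : Fin 3 → Bool,
            if P i = t then (∏ l ∈ Finset.univ.erase i, muE ε (P l)) * φ P i j else 0)
          = piE3 j t)) ∧
    -- yet every item-independent choice of non-negative weights satisfies the
    -- weighted Border inequality:
    (∀ W : Fin 3 → Bool → ℝ, (∀ i t, 0 ≤ W i t) →
      ∑ i : Fin 3, ∑ j : Fin 3, ∑ t : Bool, W i t * piE3 j t * muE ε t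
        ≤ ∑ P : Fin 3 → Bool, (∏ i, muE ε (P i)) *
            sSup ((fun φ => ∑ i : Fin 3, ∑ j : Fin 3, W i (P i) * φ i j) '' F3)) :=
  ⟨not_exists_allocation_piE3 hε hε'.le, weightedBorder_of_itemIndependent hε.le hε'.le⟩
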